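/- arXiv:2603.22129 — 5 statements merged into one kernel-verified Lean document; each statement's English description precedes it below -/
import Mathlib

section
/- For x ∈ ℂ let L(x) denote the 2×2 complex matrix [[1 − x, −x],[0, 1 − x]] (the linear pencil L_A(x) = I − x·A for the Jordan block A = [[1,1],[0,1]]). Then the quantity ‖L(rx)⁻¹ · L(x)‖ is unbounded over r ∈ (0,1) and |x| < 1: for every M > 0 there exist r ∈ (0,1) and x ∈ ℂ with |x| < 1 such that L(rx) is invertible and ‖L(rx)⁻¹ · L(x)‖ > M. -/
/-!
Take `x = r = t` real, so that `r x = t²`. Since `L(c) = (1 - c) I - c N` with `N² = 0`, the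
`(0, 1)` entry of `L(t²)⁻¹ L(t)` is `(t² - t) / (1 - t²)²`, of modulus `t / ((1 - t)(1 + t)²)`,
which tends to `∞` as `t → 1⁻`. A matrix entry never exceeds the operator norm.
-/

noncomputable def opNorm {m : Type*} [Fintype m] [DecidableEq m] (M : Matrix m m ℂ) : ℝ :=
  ‖Matrix.toEuclideanCLM (𝕜 := ℂ) M‖

open Filter Topology Matrix

theorem norm_entry_le_opNorm {m : Type*} [Fintype m] [DecidableEq m] (A : Matrix m m ℂ)
    (i j : m) : ‖A i j‖ ≤ opNorm A := by
  set T := toEuclideanCLM (𝕜 := ℂ) A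
  set e : EuclideanSpace ℂ m := WithLp.toLp 2 (Pi.single j 1)
  have hcol : T e i = A i j := by
    rw [show T e i = (A *ᵥ Pi.single j 1) i from rfl, mulVec_single_one, col_apply]
  calc ‖A i j‖ = ‖T e i‖ := by rw [hcol]
    _ ≤ ‖T e‖ := PiLp.norm_apply_le _ _
    _ ≤ ‖T‖ * ‖e‖ := T.le_opNorm _
    _ = opNorm A := by simp [opNorm, T, e]

theorem Matrix.inv_fin_two_upper_of_diag_eq {K : Type*} [Field K] {a : K} (ha : a ≠ 0)
    (b : K) : !![a, b; 0, a]⁻¹ = !![a⁻¹, -b / a ^ 2; 0, a⁻¹] := by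
  refine inv_eq_right_inv ?_
  ext i j
  fin_cases i <;> fin_cases j <;> simp [Matrix.mul_apply, Fin.sum_univ_two] <;> field_simp
  ring

theorem jordan_pencil_inv_mul_apply_zero_one {K : Type*} [Field K] {c : K} (hc : c ≠ 1)
    (x : K) :
    (!![1 - c, -c; 0, 1 - c]⁻¹ * !![1 - x, -x; 0, 1 - x]) 0 1 = (c - x) / (1 - c) ^ 2 := by
  rw [inv_fin_two_upper_of_diag_eq (sub_ne_zero.mpr hc.symm)]
  simp only [neg_neg, mul_apply, of_apply, cons_val', cons_val_fin_one, cons_val_zero,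
    cons_val_one, Fin.sum_univ_two, mul_neg]
  field_simp
  ring

theorem norm_ofReal_mul_self_sub_div {t : ℝ} (ht0 : 0 < t) (ht1 : t < 1) :
    ‖((t : ℂ) * t - t) / (1 - t * t) ^ 2‖ = t / ((1 - t) * (1 + t) ^ 2) := by
  have h1t : 0 < 1 - t := sub_pos.mpr ht1
  have h1t' : (1 - t : ℂ) ≠ 0 := by exact_mod_cast h1t.ne'
  have h1t'' : (1 + t : ℂ) ≠ 0 := by exact_mod_cast (by positivity : 0 < 1 + t).ne'
  have hreal : ((t : ℂ) * t - t) / (1 - t * t) ^ 2 =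
      ((-(t / ((1 - t) * (1 + t) ^ 2)) : ℝ) : ℂ) := by
    rw [show (1 - (t : ℂ) * t) = (1 - t) * (1 + t) by ring]
    push_cast
    field_simp
    ring
  rw [hreal, Complex.norm_real, norm_neg, Real.norm_of_nonneg (by positivity)]

theorem tendsto_div_one_sub_mul_one_add_sq :
    Tendsto (fun t : ℝ => t / ((1 - t) * (1 + t) ^ 2)) (𝓝[<] 1) atTop := by
  have hfac : Tendsto (fun t : ℝ => t / (1 + t) ^ 2) (𝓝[<] 1) (𝓝 (1 / 4)) := by
    have : Tendsto (fun t : ℝ => t / (1 + t) ^ 2) (𝓝 1) (𝓝 (1 / (1 + 1) ^ 2)) :=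
      (continuousAt_id.div ((continuousAt_const.add continuousAt_id).pow 2) (by norm_num)).tendsto
    exact (this.mono_left nhdsWithin_le_nhds).trans (by norm_num)
  have hinv : Tendsto (fun t : ℝ => (1 - t)⁻¹) (𝓝[<] 1) atTop := by
    refine tendsto_inv_nhdsGT_zero.comp ?_
    have hmaps : Set.MapsTo (fun t : ℝ => 1 - t) (Set.Iio 1) (Set.Ioi 0) :=
      fun _ ht => sub_pos.mpr (Set.mem_Iio.mp ht)
    simpa using (continuous_sub_left (1 : ℝ)).continuousWithinAt.tendsto_nhdsWithin
      (x := 1) hmaps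
  refine (hfac.pos_mul_atTop (by norm_num) hinv).congr fun t => ?_
  field_simp

/-- **Failure of the NGN bound for the Jordan-block pencil.**
With `L(x) = [[1 − x, −x],[0, 1 − x]]`, the quantity `‖L(rx)⁻¹·L(x)‖` is
unbounded over `r ∈ (0,1)` and `|x| < 1`. -/
theorem jordan_block_pencil_ngn_unbounded :
    let L : ℂ → Matrix (Fin 2) (Fin 2) ℂ := fun x => !![1 - x, -x; 0, 1 - x]
    ∀ M : ℝ, 0 < M → ∃ (r : ℝ) (x : ℂ), 0 < r ∧ r < 1 ∧ ‖x‖ < 1 ∧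
      IsUnit (L ((r : ℂ) * x)) ∧ M < opNorm ((L ((r : ℂ) * x))⁻¹ * L x) := by
  intro L M _
  obtain ⟨t, hMt, ht0, ht1⟩ : ∃ t : ℝ, M < t / ((1 - t) * (1 + t) ^ 2) ∧ 0 < t ∧ t < 1 :=
    ((tendsto_div_one_sub_mul_one_add_sq.eventually_gt_atTop M).and
      (Ioo_mem_nhdsLT zero_lt_one)).exists
  have hnorm : ‖(t : ℂ)‖ < 1 := by rwa [Complex.norm_real, Real.norm_of_nonneg ht0.le]
  have hc : (t : ℂ) * t ≠ 1 := by
    have : t * t < 1 := by nlinarith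
    exact_mod_cast this.ne
  refine ⟨t, t, ht0, ht1, hnorm, ?_, ?_⟩
  · rw [isUnit_iff_isUnit_det, det_fin_two_of, isUnit_iff_ne_zero, mul_zero, sub_zero]
    exact mul_self_ne_zero.mpr (sub_ne_zero.mpr hc.symm)
  · calc M < t / ((1 - t) * (1 + t) ^ 2) := hMt
      _ = ‖((L (t * t))⁻¹ * L t) 0 1‖ := by
        rw [jordan_pencil_inv_mul_apply_zero_one hc, norm_ofReal_mul_self_sub_div ht0 ht1]
      _ ≤ opNorm _ := norm_entry_le_opNorm _ _ _
end

section
/- Let B_Z := [[1/2, −1/(2√3)],[−1/(2√3), 1/6]] and B_W := [[1/2, 1/(2√3)],[1/(2√3), 1/6]] be 2×2 real (hence complex) matrices. Then for every n ≥ 1 and all n×n complex matrices X, Y with ‖X‖ ≤ 1 and ‖Y‖ ≤ 1 (operator norm), one has ‖B_Z ⊗ X + B_W ⊗ Y‖ ≤ 1, where ⊗ denotes the Kronecker product. -/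
open scoped Kronecker

private lemma eucl_norm_sq {ι : Type*} [Fintype ι] (y : EuclideanSpace ℂ ι) :
    ‖y‖ ^ 2 = ∑ i, ‖y i‖ ^ 2 := by
  rw [EuclideanSpace.norm_eq, Real.sq_sqrt (Finset.sum_nonneg fun i _ => sq_nonneg _)]

set_option maxHeartbeats 1000000 in
/-- **The tuple `(B_Z, B_W)` lies in the closed polar dual of the NC bidisk.**
With `B_Z = [[1/2, −1/(2√3)],[−1/(2√3), 1/6]]` and
`B_W = [[1/2, 1/(2√3)],[1/(2√3), 1/6]]`, one has `‖B_Z ⊗ X + B_W ⊗ Y‖ ≤ 1`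
for all contractions `X, Y`. -/
theorem polar_dual_membership_example (n : ℕ) (hn : 1 ≤ n)
    (X Y : Matrix (Fin n) (Fin n) ℂ) (hX : opNorm X ≤ 1) (hY : opNorm Y ≤ 1) :
    let BZ : Matrix (Fin 2) (Fin 2) ℂ :=
      !![1/2, -(((2 * Real.sqrt 3 : ℝ) : ℂ))⁻¹; -(((2 * Real.sqrt 3 : ℝ) : ℂ))⁻¹, 1/6]
    let BW : Matrix (Fin 2) (Fin 2) ℂ :=
      !![1/2, (((2 * Real.sqrt 3 : ℝ) : ℂ))⁻¹; (((2 * Real.sqrt 3 : ℝ) : ℂ))⁻¹, 1/6]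
    opNorm (BZ ⊗ₖ X + BW ⊗ₖ Y) ≤ 1 := by
  intro BZ BW
  -- scalar constants
  set α : ℂ := ((Real.sqrt 2 : ℝ) : ℂ)⁻¹ with hαdef
  set β : ℂ := ((Real.sqrt 6 : ℝ) : ℂ)⁻¹ with hβdef
  have h2 : Real.sqrt 2 * Real.sqrt 2 = 2 := Real.mul_self_sqrt (by norm_num)
  have h6 : Real.sqrt 6 * Real.sqrt 6 = 6 := Real.mul_self_sqrt (by norm_num)
  have h26 : Real.sqrt 2 * Real.sqrt 6 = 2 * Real.sqrt 3 := by
    rw [← Real.sqrt_mul (by norm_num : (0:ℝ) ≤ 2)]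
    rw [show (2:ℝ) * 6 = 2 ^ 2 * 3 by norm_num,
      Real.sqrt_mul (by positivity), Real.sqrt_sq (by norm_num)]
  have hα2 : α * α = 1 / 2 := by
    rw [hαdef, ← mul_inv, ← Complex.ofReal_mul, h2]; norm_num
  have hβ2 : β * β = 1 / 6 := by
    rw [hβdef, ← mul_inv, ← Complex.ofReal_mul, h6]; norm_num
  have hαβ : α * β = (((2 * Real.sqrt 3 : ℝ) : ℂ))⁻¹ := by
    rw [hαdef, hβdef, ← mul_inv, ← Complex.ofReal_mul, h26]
  have hnα : ‖α‖ ^ 2 = 1 / 2 := by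
    rw [hαdef, norm_inv, Complex.norm_real, Real.norm_eq_abs,
      abs_of_nonneg (Real.sqrt_nonneg 2), inv_pow, sq, h2]; norm_num
  have hnβ : ‖β‖ ^ 2 = 1 / 6 := by
    rw [hβdef, norm_inv, Complex.norm_real, Real.norm_eq_abs,
      abs_of_nonneg (Real.sqrt_nonneg 6), inv_pow, sq, h6]; norm_num
  rw [opNorm]
  refine ContinuousLinearMap.opNorm_le_bound _ zero_le_one fun x => ?_
  rw [one_mul]
  -- block vectors
  set a : EuclideanSpace ℂ (Fin n) :=
    (WithLp.equiv 2 _).symm (fun k => α * x (0, k) - β * x (1, k)) with hadef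
  set b : EuclideanSpace ℂ (Fin n) :=
    (WithLp.equiv 2 _).symm (fun k => α * x (0, k) + β * x (1, k)) with hbdef
  set p : EuclideanSpace ℂ (Fin n) := Matrix.toEuclideanCLM (𝕜 := ℂ) X a with hpdef
  set q : EuclideanSpace ℂ (Fin n) := Matrix.toEuclideanCLM (𝕜 := ℂ) Y b with hqdef
  set w : EuclideanSpace ℂ (Fin 2 × Fin n) :=
    Matrix.toEuclideanCLM (𝕜 := ℂ) (BZ ⊗ₖ X + BW ⊗ₖ Y) x with hwdef
  have ha : ∀ k, a k = α * x (0, k) - β * x (1, k) := fun k => rfl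
  have hb : ∀ k, b k = α * x (0, k) + β * x (1, k) := fun k => rfl
  have hp : ∀ k, p k = ∑ l, X k l * a l := fun k => rfl
  have hq : ∀ k, q k = ∑ l, Y k l * b l := fun k => rfl
  -- coordinates of w
  have hw0 : ∀ k, w (0, k) = α * (p k + q k) := by
    intro k
    have h : w (0, k) = ∑ z : Fin 2 × Fin n, (BZ ⊗ₖ X + BW ⊗ₖ Y) (0, k) z * x z := rfl
    rw [h, Fintype.sum_prod_type, Fin.sum_univ_two, hp, hq]
    simp only [ha, hb, Matrix.add_apply, Matrix.kroneckerMap_apply, BZ, BW,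
      Matrix.cons_val', Matrix.cons_val_zero, Matrix.cons_val_one, Matrix.head_cons,
      Matrix.head_fin_const, Matrix.empty_val', Matrix.cons_val_fin_one, Matrix.of_apply]
    rw [mul_add, Finset.mul_sum, Finset.mul_sum, ← Finset.sum_add_distrib,
      ← Finset.sum_add_distrib]
    refine Finset.sum_congr rfl fun l _ => ?_
    rw [← hα2, ← hαβ]; ring
  have hw1 : ∀ k, w (1, k) = β * (q k - p k) := by
    intro k
    have h : w (1, k) = ∑ z : Fin 2 × Fin n, (BZ ⊗ₖ X + BW ⊗ₖ Y) (1, k) z * x z := rfl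
    rw [h, Fintype.sum_prod_type, Fin.sum_univ_two, hp, hq]
    simp only [ha, hb, Matrix.add_apply, Matrix.kroneckerMap_apply, BZ, BW,
      Matrix.cons_val', Matrix.cons_val_zero, Matrix.cons_val_one, Matrix.head_cons,
      Matrix.head_fin_const, Matrix.empty_val', Matrix.cons_val_fin_one, Matrix.of_apply]
    rw [mul_sub, Finset.mul_sum, Finset.mul_sum, ← Finset.sum_sub_distrib]
    rw [← Finset.sum_add_distrib]
    refine Finset.sum_congr rfl fun l _ => ?_
    rw [← hβ2, ← hαβ]; ring
  -- ‖w‖² = (1/2)‖p+q‖² + (1/6)‖q−p‖²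
  have hw2 : ‖w‖ ^ 2 = (1 / 2) * ‖p + q‖ ^ 2 + (1 / 6) * ‖q - p‖ ^ 2 := by
    rw [eucl_norm_sq, Fintype.sum_prod_type, Fin.sum_univ_two]
    have e0 : ∀ k, ‖w (0, k)‖ ^ 2 = (1 / 2) * ‖(p + q) k‖ ^ 2 := by
      intro k
      rw [hw0 k, norm_mul, mul_pow, hnα]; rfl
    have e1 : ∀ k, ‖w (1, k)‖ ^ 2 = (1 / 6) * ‖(q - p) k‖ ^ 2 := by
      intro k
      rw [hw1 k, norm_mul, mul_pow, hnβ]; rfl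
    simp only [e0, e1]
    rw [← Finset.mul_sum, ← Finset.mul_sum, eucl_norm_sq, eucl_norm_sq]
  -- ‖a‖² + ‖b‖² ≤ ‖x‖²
  have hab : ‖a‖ ^ 2 + ‖b‖ ^ 2 ≤ ‖x‖ ^ 2 := by
    rw [eucl_norm_sq a, eucl_norm_sq b, eucl_norm_sq x, Fintype.sum_prod_type,
      Fin.sum_univ_two, ← Finset.sum_add_distrib, ← Finset.sum_add_distrib]
    refine Finset.sum_le_sum fun k _ => ?_
    rw [ha k, hb k]
    have hpar := parallelogram_law_with_norm ℂ (α * x (0, k)) (β * x (1, k))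
    have h1 : ‖α * x (0, k)‖ ^ 2 = (1 / 2) * ‖x (0, k)‖ ^ 2 := by
      rw [norm_mul, mul_pow, hnα]
    have h2' : ‖β * x (1, k)‖ ^ 2 = (1 / 6) * ‖x (1, k)‖ ^ 2 := by
      rw [norm_mul, mul_pow, hnβ]
    nlinarith [sq_nonneg ‖x (1, k)‖, sq_nonneg (‖α * x (0,k) + β * x (1,k)‖),
      sq_nonneg (‖α * x (0,k) - β * x (1,k)‖)]
  -- contraction bounds
  have hP : ‖p‖ ≤ ‖a‖ := by
    calc ‖p‖ ≤ ‖Matrix.toEuclideanCLM (𝕜 := ℂ) X‖ * ‖a‖ :=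
          (Matrix.toEuclideanCLM (𝕜 := ℂ) X).le_opNorm a
      _ ≤ 1 * ‖a‖ := by
          exact mul_le_mul_of_nonneg_right hX (norm_nonneg a)
      _ = ‖a‖ := one_mul _
  have hQ : ‖q‖ ≤ ‖b‖ := by
    calc ‖q‖ ≤ ‖Matrix.toEuclideanCLM (𝕜 := ℂ) Y‖ * ‖b‖ :=
          (Matrix.toEuclideanCLM (𝕜 := ℂ) Y).le_opNorm b
      _ ≤ 1 * ‖b‖ := by
          exact mul_le_mul_of_nonneg_right hY (norm_nonneg b)
      _ = ‖b‖ := one_mul _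
  -- inner product expansion
  have hadd : ‖p + q‖ ^ 2 = ‖p‖ ^ 2 + 2 * RCLike.re (inner (𝕜 := ℂ) p q) + ‖q‖ ^ 2 :=
    norm_add_sq (𝕜 := ℂ) p q
  have hsub : ‖q - p‖ ^ 2 = ‖q‖ ^ 2 - 2 * RCLike.re (inner (𝕜 := ℂ) q p) + ‖p‖ ^ 2 :=
    norm_sub_sq (𝕜 := ℂ) q p
  have hRle : RCLike.re (inner (𝕜 := ℂ) p q) ≤ ‖p‖ * ‖q‖ := re_inner_le_norm (𝕜 := ℂ) p q
  have hRle' : RCLike.re (inner (𝕜 := ℂ) q p) ≤ ‖q‖ * ‖p‖ := re_inner_le_norm (𝕜 := ℂ) q p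
  have hRsym : RCLike.re (inner (𝕜 := ℂ) q p) = RCLike.re (inner (𝕜 := ℂ) p q) := by
    rw [← inner_conj_symm p q, RCLike.conj_re]
  -- conclude ‖w‖² ≤ ‖x‖²
  have hfinal : ‖w‖ ^ 2 ≤ ‖x‖ ^ 2 := by
    have hpa : ‖p‖ ^ 2 ≤ ‖a‖ ^ 2 := by nlinarith [norm_nonneg p, norm_nonneg a]
    have hqb : ‖q‖ ^ 2 ≤ ‖b‖ ^ 2 := by nlinarith [norm_nonneg q, norm_nonneg b]
    nlinarith [sq_nonneg (‖p‖ - ‖q‖), norm_nonneg p, norm_nonneg q]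
  have := Real.sqrt_le_sqrt hfinal
  rwa [Real.sqrt_sq (norm_nonneg _), Real.sqrt_sq (norm_nonneg _)] at this
end

section
/- For every n ≥ 1 and all n×n complex matrices Z, W with ‖Z‖ < 1 and ‖W‖ < 1 (operator norm), the matrix 2I − Z − W is invertible and the NC parallel sum 𝔓(Z,W) := (I − Z)(2I − Z − W)⁻¹(I − W) is a contraction: ‖(I − Z)(2I − Z − W)⁻¹(I − W)‖ ≤ 1. -/
open scoped InnerProductSpace

theorem mul_units_inv_mul_comm_of_coe_eq_add {R : Type*} [Ring R] {A C : R} {u : Rˣ}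
    (hu : (u : R) = A + C) : A * ↑u⁻¹ * C = C * ↑u⁻¹ * A := by
  obtain rfl : C = u - A := by rw [hu]; abel
  simp only [mul_sub, sub_mul, mul_assoc, Units.inv_mul, Units.mul_inv, mul_one, one_mul]

theorem isUnit_two_sub_sub (𝕜 : Type*) {R : Type*} [RCLike 𝕜] [NormedRing R]
    [NormedAlgebra 𝕜 R] [CompleteSpace R] {T S : R} (hT : ‖T‖ < 1) (hS : ‖S‖ < 1) :
    IsUnit (2 - T - S) := by
  have hmean : ‖(2⁻¹ : 𝕜) • (T + S)‖ < 1 := by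
    rw [norm_smul, norm_inv, RCLike.norm_ofNat]
    linarith [norm_add_le T S]
  have htwo : IsUnit (2 : R) := by
    simpa [map_ofNat] using
      (isUnit_iff_ne_zero.mpr (two_ne_zero (α := 𝕜))).map (algebraMap 𝕜 R)
  convert htwo.mul (Units.oneSub _ hmean).isUnit using 1
  rw [Units.val_oneSub, mul_sub, mul_one, mul_smul_comm, two_mul, ← two_smul 𝕜, smul_smul,
    inv_mul_cancel₀ two_ne_zero, one_smul, sub_sub]

section InnerProductSpace

variable {𝕜 E : Type*} [RCLike 𝕜] [NormedAddCommGroup E] [InnerProductSpace 𝕜 E]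

theorem norm_sub_sq_le_two_mul_re_inner_of_norm_le {u v : E} (h : ‖v‖ ≤ ‖u‖) :
    ‖u - v‖ ^ 2 ≤ 2 * RCLike.re ⟪u - v, u⟫_𝕜 := by
  rw [@norm_sub_sq 𝕜, inner_sub_left, map_sub, inner_self_eq_norm_sq,
    inner_re_symm (𝕜 := 𝕜) u v]
  nlinarith [norm_nonneg v]

theorem norm_one_sub_mul_units_inv_mul_one_sub_le_one {T S : E →L[𝕜] E} (hT : ‖T‖ ≤ 1)
    (hS : ‖S‖ ≤ 1) (u : (E →L[𝕜] E)ˣ) (hu : (u : E →L[𝕜] E) = 2 - T - S) :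
    ‖(1 - T) * ↑u⁻¹ * (1 - S)‖ ≤ 1 := by
  have hu' : (u : E →L[𝕜] E) = (1 - T) + (1 - S) := by
    rw [hu, ← one_add_one_eq_two]; abel
  have half_accretive (V : E →L[𝕜] E) (hV : ‖V‖ ≤ 1) (z : E) :
      ‖(1 - V) z‖ ^ 2 ≤ 2 * RCLike.re ⟪(1 - V) z, z⟫_𝕜 :=
    norm_sub_sq_le_two_mul_re_inner_of_norm_le (by simpa using V.le_of_opNorm_le hV z)
  refine ContinuousLinearMap.opNorm_le_bound _ zero_le_one fun x => ?_
  set y := ((1 - T) * ↑u⁻¹ * (1 - S)) x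
  set a := (↑u⁻¹ * (1 - S)) x
  set b := (↑u⁻¹ * (1 - T)) x
  have hab : a + b = x := by
    rw [← add_apply, ← mul_add, add_comm, ← hu', Units.inv_mul]; rfl
  have hya : y = (1 - T) a := rfl
  have hyb : y = (1 - S) b := by
    simp only [y, mul_units_inv_mul_comm_of_coe_eq_add hu']
    rfl
  have hyx : ‖y‖ ^ 2 ≤ RCLike.re ⟪y, x⟫_𝕜 := by
    have ha := hya ▸ half_accretive T hT a
    have hb := hyb ▸ half_accretive S hS b
    rw [← hab, inner_add_right, map_add]
    linarith
  nlinarith [re_inner_le_norm (𝕜 := 𝕜) y x, norm_nonneg y, norm_nonneg x]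

end InnerProductSpace

theorem nc_parallel_sum_contractive_general (n : ℕ)
    (Z W : Matrix (Fin n) (Fin n) ℂ) (hZ : opNorm Z < 1) (hW : opNorm W < 1) :
    IsUnit (2 - Z - W) ∧
    opNorm ((1 - Z) * (2 - Z - W)⁻¹ * (1 - W)) ≤ 1 := by
  have hunit : IsUnit (2 - Z - W) := by
    rw [← isUnit_map_iff (Matrix.toEuclideanCLM (𝕜 := ℂ) (n := Fin n)), map_sub, map_sub,
      map_ofNat]
    exact isUnit_two_sub_sub ℂ hZ hW
  refine ⟨hunit, ?_⟩
  have h := norm_one_sub_mul_units_inv_mul_one_sub_le_one hZ.le hW.le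
    (Units.map (Matrix.toEuclideanCLM (𝕜 := ℂ) (n := Fin n)) hunit.unit) (by simp [map_ofNat])
  rwa [Units.coe_map_inv, Matrix.coe_units_inv, IsUnit.unit_spec, MonoidHom.coe_coe,
    ← map_one (Matrix.toEuclideanCLM (𝕜 := ℂ) (n := Fin n)), ← map_sub, ← map_sub, ← map_mul,
    ← map_mul] at h

/-- **Contractivity of the NC parallel sum.** For strict contractions `Z, W`,
the matrix `2I − Z − W` is invertible and
`𝔓(Z,W) = (I − Z)(2I − Z − W)⁻¹(I − W)` is a contraction. -/
theorem nc_parallel_sum_contractive (n : ℕ) (hn : 1 ≤ n)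
    (Z W : Matrix (Fin n) (Fin n) ℂ) (hZ : opNorm Z < 1) (hW : opNorm W < 1) :
    IsUnit (2 - Z - W) ∧
    opNorm ((1 - Z) * (2 - Z - W)⁻¹ * (1 - W)) ≤ 1 :=
  nc_parallel_sum_contractive_general n Z W hZ hW
end

section
/- For every n ≥ 1 and all n×n complex matrices Z, W with ‖Z‖ < 1 and ‖W‖ < 1 (operator norm), the matrix 2I − Z − W is invertible and the NC parallel sum M := (I − Z)(2I − Z − W)⁻¹(I − W) is accretive: M + M* is positive semidefinite, where M* denotes the conjugate transpose. Equivalently, Re (v* M v) ≥ 0 for every vector v ∈ ℂⁿ. -/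
open scoped Matrix ComplexOrder

/-!
If `‖Z‖, ‖W‖ < 1` then `A = I - Z` and `B = I - W` are strictly accretive
(`Re v*Av ≥ (1 - ‖Z‖)‖v‖²`), hence invertible, and so is `A + B = 2I - Z - W`.
The parallel sum `A (A + B)⁻¹ B` is `(A⁻¹ + B⁻¹)⁻¹`, and accretivity is preserved by sums
and by inversion, because `v* M⁻¹ v` is the conjugate of `w* M w` for `v = M w`.
-/

namespace Matrix

variable {𝕜 n : Type*} [RCLike 𝕜] [Fintype n]

def IsAccretive (M : Matrix n n 𝕜) : Prop :=
  ∀ v : n → 𝕜, 0 ≤ RCLike.re (star v ⬝ᵥ M *ᵥ v)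

lemma re_dotProduct_conjTranspose_mulVec (M : Matrix n n 𝕜) (v : n → 𝕜) :
    RCLike.re (star v ⬝ᵥ Mᴴ *ᵥ v) = RCLike.re (star v ⬝ᵥ M *ᵥ v) := by
  rw [← RCLike.conj_re, ← RCLike.star_def, star_dotProduct, star_mulVec,
    conjTranspose_conjTranspose, dotProduct_mulVec, star_star]

lemma posSemidef_add_conjTranspose_iff {M : Matrix n n 𝕜} :
    (M + Mᴴ).PosSemidef ↔ M.IsAccretive := by
  have hHerm : (M + Mᴴ).IsHermitian := by
    rw [IsHermitian, conjTranspose_add, conjTranspose_conjTranspose, add_comm]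
  have hquad (v : n → 𝕜) :
      star v ⬝ᵥ (M + Mᴴ) *ᵥ v = ((2 * RCLike.re (star v ⬝ᵥ M *ᵥ v) : ℝ) : 𝕜) := by
    rw [add_mulVec, dotProduct_add, RCLike.ofReal_mul, RCLike.ofReal_ofNat, ← RCLike.add_conj,
      ← RCLike.star_def, star_dotProduct, star_mulVec, dotProduct_mulVec, star_star]
  simp only [posSemidef_iff_dotProduct_mulVec, hHerm, true_and, hquad, RCLike.ofReal_nonneg,
    mul_nonneg_iff_of_pos_left (two_pos (α := ℝ)), IsAccretive]

namespace IsAccretive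

variable {M N : Matrix n n 𝕜}

lemma add (hM : M.IsAccretive) (hN : N.IsAccretive) :
    (M + N).IsAccretive := fun v => by
  rw [add_mulVec, dotProduct_add, map_add]
  exact add_nonneg (hM v) (hN v)

/-- No invertibility hypothesis is needed: `M⁻¹ = 0` when `M` is singular. -/
lemma inv [DecidableEq n] (hM : M.IsAccretive) : M⁻¹.IsAccretive := by
  intro v
  rcases M.nonsing_inv_cancel_or_zero with ⟨hinvM, hMinv⟩ | hzero
  · obtain ⟨w, rfl⟩ : ∃ w, v = M *ᵥ w := ⟨M⁻¹ *ᵥ v, by rw [mulVec_mulVec, hMinv, one_mulVec]⟩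
    rw [mulVec_mulVec, hinvM, one_mulVec, star_mulVec, ← dotProduct_mulVec,
      re_dotProduct_conjTranspose_mulVec]
    exact hM w
  · simp [hzero]

end IsAccretive

def IsStrictlyAccretive (M : Matrix n n 𝕜) : Prop :=
  ∀ v ≠ 0, 0 < RCLike.re (star v ⬝ᵥ M *ᵥ v)

namespace IsStrictlyAccretive

variable {M N : Matrix n n 𝕜}

lemma isAccretive (hM : M.IsStrictlyAccretive) : M.IsAccretive := fun v => by
  rcases eq_or_ne v 0 with rfl | hv
  · simp
  · exact (hM v hv).le

lemma add (hM : M.IsStrictlyAccretive) (hN : N.IsStrictlyAccretive) :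
    (M + N).IsStrictlyAccretive := fun v hv => by
  rw [add_mulVec, dotProduct_add, map_add]
  exact add_pos (hM v hv) (hN v hv)

lemma isUnit [DecidableEq n] (hM : M.IsStrictlyAccretive) : IsUnit M := by
  rw [isUnit_iff_isUnit_det, isUnit_iff_ne_zero]
  intro hdet
  obtain ⟨v, hv, hMv⟩ := exists_mulVec_eq_zero_iff.mpr hdet
  simpa [hMv] using hM v hv

end IsStrictlyAccretive

section CommRing

variable {α : Type*} [DecidableEq n] [CommRing α]

lemma inv_add_inv_eq {A B : Matrix n n α} (hA : IsUnit A) (hB : IsUnit B) :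
    A⁻¹ + B⁻¹ = B⁻¹ * (A + B) * A⁻¹ := by
  rw [isUnit_iff_isUnit_det] at hA hB
  rw [mul_add, add_mul, nonsing_inv_mul _ hB, one_mul, mul_assoc, mul_nonsing_inv _ hA, mul_one,
    add_comm]

lemma inv_inv_add_inv {A B : Matrix n n α} (hA : IsUnit A) (hB : IsUnit B) :
    (A⁻¹ + B⁻¹)⁻¹ = A * (A + B)⁻¹ * B := by
  rw [inv_add_inv_eq hA hB, mul_inv_rev, mul_inv_rev,
    nonsing_inv_nonsing_inv _ ((isUnit_iff_isUnit_det A).mp hA),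
    nonsing_inv_nonsing_inv _ ((isUnit_iff_isUnit_det B).mp hB), Matrix.mul_assoc]

end CommRing
end Matrix

open Matrix in
lemma isStrictlyAccretive_one_sub_of_opNorm_lt_one {m : Type*} [Fintype m] [DecidableEq m]
    {Z : Matrix m m ℂ} (hZ : opNorm Z < 1) : (1 - Z).IsStrictlyAccretive := by
  intro v hv
  set x : EuclideanSpace ℂ m := WithLp.toLp 2 v
  have hx : 0 < ‖x‖ := by simpa [x] using hv
  have hself : star v ⬝ᵥ v = ‖x‖ ^ 2 := by
    rw [dotProduct_comm, ← EuclideanSpace.inner_toLp_toLp, inner_self_eq_norm_sq_to_K]; rfl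
  have hZx : ‖star v ⬝ᵥ Z *ᵥ v‖ ≤ opNorm Z * ‖x‖ ^ 2 :=
    calc ‖star v ⬝ᵥ Z *ᵥ v‖ = ‖inner ℂ x (toEuclideanCLM (𝕜 := ℂ) Z x)‖ := by
          rw [toEuclideanCLM_toLp, EuclideanSpace.inner_toLp_toLp, dotProduct_comm]
      _ ≤ ‖x‖ * ‖toEuclideanCLM (𝕜 := ℂ) Z x‖ := norm_inner_le_norm _ _
      _ ≤ ‖x‖ * (opNorm Z * ‖x‖) := by
          gcongr; exact (toEuclideanCLM (𝕜 := ℂ) Z).le_opNorm x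
      _ = opNorm Z * ‖x‖ ^ 2 := by ring
  calc 0 < ‖x‖ ^ 2 - opNorm Z * ‖x‖ ^ 2 := by
        nlinarith [mul_lt_mul_of_pos_right hZ (pow_pos hx 2)]
    _ ≤ ‖x‖ ^ 2 - (star v ⬝ᵥ Z *ᵥ v).re := by
        linarith [Complex.re_le_norm (star v ⬝ᵥ Z *ᵥ v)]
    _ = RCLike.re (star v ⬝ᵥ (1 - Z) *ᵥ v) := by
        rw [sub_mulVec, one_mulVec, dotProduct_sub, map_sub, hself, RCLike.re_to_complex]
        norm_cast

theorem nc_parallel_sum_accretive_general (n : ℕ)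
    (Z W : Matrix (Fin n) (Fin n) ℂ) (hZ : opNorm Z < 1) (hW : opNorm W < 1) :
    IsUnit (2 - Z - W) ∧
    (((1 - Z) * (2 - Z - W)⁻¹ * (1 - W)) +
      ((1 - Z) * (2 - Z - W)⁻¹ * (1 - W))ᴴ).PosSemidef ∧
    ∀ v : Fin n → ℂ, 0 ≤
      (dotProduct (star v)
        (((1 - Z) * (2 - Z - W)⁻¹ * (1 - W)).mulVec v)).re := by
  have hA := isStrictlyAccretive_one_sub_of_opNorm_lt_one hZ
  have hB := isStrictlyAccretive_one_sub_of_opNorm_lt_one hW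
  have hsum : 2 - Z - W = (1 - Z) + (1 - W) := by rw [← one_add_one_eq_two]; abel
  have hM : ((1 - Z) * (2 - Z - W)⁻¹ * (1 - W)).IsAccretive := by
    rw [hsum, ← Matrix.inv_inv_add_inv hA.isUnit hB.isUnit]
    exact (hA.isAccretive.inv.add hB.isAccretive.inv).inv
  exact ⟨hsum ▸ (hA.add hB).isUnit, Matrix.posSemidef_add_conjTranspose_iff.mpr hM, hM⟩

/-- **Accretivity of the NC parallel sum.** For strict contractions `Z, W`, the
matrix `2I − Z − W` is invertible and `M = (I − Z)(2I − Z − W)⁻¹(I − W)` is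
accretive: `M + M*` is positive semidefinite; equivalently `Re(v*Mv) ≥ 0`. -/
theorem nc_parallel_sum_accretive (n : ℕ) (hn : 1 ≤ n)
    (Z W : Matrix (Fin n) (Fin n) ℂ) (hZ : opNorm Z < 1) (hW : opNorm W < 1) :
    IsUnit (2 - Z - W) ∧
    (((1 - Z) * (2 - Z - W)⁻¹ * (1 - W)) +
      ((1 - Z) * (2 - Z - W)⁻¹ * (1 - W))ᴴ).PosSemidef ∧
    ∀ v : Fin n → ℂ, 0 ≤
      (dotProduct (star v)
        (((1 - Z) * (2 - Z - W)⁻¹ * (1 - W)).mulVec v)).re :=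
  nc_parallel_sum_accretive_general n Z W hZ hW
end

section
/- For t ∈ ℝ define the 2×2 complex matrices X_t := cos t · [[cos t, sin t],[sin t, −cos t]] and Y_t := cos t · [[cos t, −sin t],[−sin t, −cos t]]. Then the decoupled NC parallel sums are unbounded on the NC bidisk along this path: for every M > 0 there exists t ∈ (0, π/2) such that ‖X_t‖ < 1, ‖Y_t‖ < 1, the matrix 2I − X_t − Y_t is invertible, and both ‖(2I − X_t − Y_t)⁻¹ (I − X_t)(I − Y_t)‖ > M and ‖(I − X_t)(I − Y_t)(2I − X_t − Y_t)⁻¹‖ > M. -/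
open Matrix Filter Topology Real

lemma norm_apply_le_opNorm {n : Type*} [Fintype n] [DecidableEq n] (A : Matrix n n ℂ) (i j : n) :
    ‖A i j‖ ≤ opNorm A := by
  have hA : A i j = inner ℂ (EuclideanSpace.single i (1 : ℂ))
      (toEuclideanCLM (𝕜 := ℂ) A (EuclideanSpace.single j 1)) := by
    simp [EuclideanSpace.inner_single_left, mulVec_single]
  calc ‖A i j‖ ≤ ‖toEuclideanCLM (𝕜 := ℂ) A (EuclideanSpace.single j 1)‖ := by
        simpa [hA] using norm_inner_le_norm (𝕜 := ℂ) (EuclideanSpace.single i (1 : ℂ)) _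
    _ ≤ opNorm A := by
        simpa [opNorm] using (toEuclideanCLM (𝕜 := ℂ) A).le_opNorm (EuclideanSpace.single j 1)

lemma opNorm_smul_of_mem_unitary {n : Type*} [Fintype n] [DecidableEq n] [Nonempty n]
    {U : Matrix n n ℂ} (hU : U ∈ unitary (Matrix n n ℂ)) (a : ℂ) :
    opNorm (a • U) = ‖a‖ := by
  rw [opNorm, map_smul, norm_smul, CStarRing.norm_of_mem_unitary (Unitary.map_mem _ hU), mul_one]

lemma inv_diagonal_of_ne_zero {n K : Type*} [Fintype n] [DecidableEq n] [Field K] {d : n → K}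
    (hd : ∀ i, d i ≠ 0) : (diagonal d)⁻¹ = diagonal d⁻¹ :=
  inv_eq_left_inv <| by rw [diagonal_mul_diagonal, ← diagonal_one]; congr; ext i; simp [hd i]

lemma tendsto_cos_pow_three_div_sin_nhdsGT_zero :
    Tendsto (fun t => cos t ^ 3 / sin t) (𝓝[>] 0) atTop := by
  have hsin : Tendsto sin (𝓝[>] 0) (𝓝[>] 0) := by
    refine tendsto_nhdsWithin_of_tendsto_nhds_of_eventually_within _
      (continuous_sin.tendsto' 0 0 sin_zero |>.mono_left nhdsWithin_le_nhds) ?_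
    filter_upwards [Ioo_mem_nhdsGT pi_pos] with t ht using sin_pos_of_pos_of_lt_pi ht.1 ht.2
  have hcos : Tendsto (fun t => cos t ^ 3) (𝓝[>] 0) (𝓝 1) := by
    simpa using ((continuous_cos.fun_pow 3).tendsto 0).mono_left nhdsWithin_le_nhds
  simpa [div_eq_mul_inv] using hcos.pos_mul_atTop one_pos (tendsto_inv_nhdsGT_zero.comp hsin)

section ParallelSums

variable {n R : Type*} [Fintype n] [DecidableEq n] [CommRing R]

noncomputable def parallelSumL (Z W : Matrix n n R) : Matrix n n R :=
  (2 - Z - W)⁻¹ * ((1 - Z) * (1 - W))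

noncomputable def parallelSumR (Z W : Matrix n n R) : Matrix n n R :=
  (1 - Z) * (1 - W) * (2 - Z - W)⁻¹

end ParallelSums

def reflectionMatrix (a b : ℂ) : Matrix (Fin 2) (Fin 2) ℂ := !![a, b; b, -a]

lemma reflectionMatrix_mem_unitary {c s : ℝ} (hcs : c ^ 2 + s ^ 2 = 1) :
    reflectionMatrix c s ∈ unitary (Matrix (Fin 2) (Fin 2) ℂ) := by
  have hcs' : (c : ℂ) ^ 2 + (s : ℂ) ^ 2 = 1 := by exact_mod_cast hcs
  rw [← unitaryGroup, mem_unitaryGroup_iff']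
  ext i j
  fin_cases i <;> fin_cases j <;>
    simp [reflectionMatrix, star_eq_conjTranspose, mul_apply, Fin.sum_univ_two] <;>
    first | ring1 | linear_combination hcs'

section ReflectionPath

variable (c s : ℂ)

lemma two_sub_smul_reflectionMatrix_sub :
    2 - c • reflectionMatrix c s - c • reflectionMatrix c (-s) =
      diagonal ![2 - 2 * c ^ 2, 2 + 2 * c ^ 2] := by
  ext i j
  fin_cases i <;> fin_cases j <;> simp [reflectionMatrix, ofNat_apply] <;> ring

lemma one_sub_smul_reflectionMatrix_mul_apply_zero_one :
    ((1 - c • reflectionMatrix c s) * (1 - c • reflectionMatrix c (-s))) 0 1 =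
      -2 * c ^ 3 * s := by
  simp [reflectionMatrix, mul_apply, Fin.sum_univ_two]; ring

lemma one_sub_smul_reflectionMatrix_mul_apply_one_zero :
    ((1 - c • reflectionMatrix c s) * (1 - c • reflectionMatrix c (-s))) 1 0 =
      2 * c ^ 3 * s := by
  simp [reflectionMatrix, mul_apply, Fin.sum_univ_two]; ring

end ReflectionPath

section InvTwoSub

variable {c : ℝ} (hc : c ^ 2 ≠ 1)
include hc

lemma two_sub_two_mul_sq_vec_ne_zero :
    ∀ i, ![2 - 2 * (c : ℂ) ^ 2, 2 + 2 * (c : ℂ) ^ 2] i ≠ 0 := by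
  have h₁ : 2 - 2 * (c : ℂ) ^ 2 ≠ 0 := by norm_cast; contrapose! hc; linarith
  have h₂ : 2 + 2 * (c : ℂ) ^ 2 ≠ 0 := by norm_cast; positivity
  intro i
  fin_cases i
  exacts [h₁, h₂]

lemma isUnit_two_sub_smul_reflectionMatrix_sub (s : ℂ) :
    IsUnit (2 - (c : ℂ) • reflectionMatrix c s - (c : ℂ) • reflectionMatrix c (-s)) := by
  rw [two_sub_smul_reflectionMatrix_sub, isUnit_diagonal, Pi.isUnit_iff]
  exact fun i => (two_sub_two_mul_sq_vec_ne_zero hc i).isUnit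

lemma inv_two_sub_smul_reflectionMatrix_sub (s : ℂ) :
    (2 - (c : ℂ) • reflectionMatrix c s - (c : ℂ) • reflectionMatrix c (-s))⁻¹ =
      diagonal ![(2 - 2 * (c : ℂ) ^ 2)⁻¹, (2 + 2 * (c : ℂ) ^ 2)⁻¹] := by
  rw [two_sub_smul_reflectionMatrix_sub,
    inv_diagonal_of_ne_zero (two_sub_two_mul_sq_vec_ne_zero hc)]
  congr 1; ext i; fin_cases i <;> rfl

end InvTwoSub

section ParallelSumsAlongPath

variable {c s : ℝ} (hcs : c ^ 2 + s ^ 2 = 1) (hs : s ≠ 0)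
include hcs hs

lemma parallelSumL_reflectionMatrix_apply_zero_one :
    parallelSumL ((c : ℂ) • reflectionMatrix c s) ((c : ℂ) • reflectionMatrix c (-s)) 0 1 =
      -(c ^ 3 / s : ℝ) := by
  have hc : c ^ 2 ≠ 1 := by contrapose! hs; nlinarith
  have hcs' : (c : ℂ) ^ 2 + (s : ℂ) ^ 2 = 1 := by exact_mod_cast hcs
  have hs' : (s : ℂ) ≠ 0 := by exact_mod_cast hs
  rw [parallelSumL, inv_two_sub_smul_reflectionMatrix_sub hc, diagonal_mul,
    one_sub_smul_reflectionMatrix_mul_apply_zero_one]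
  rw [show 2 - 2 * (c : ℂ) ^ 2 = 2 * s ^ 2 by linear_combination -2 * hcs']
  push_cast
  field_simp

lemma parallelSumR_reflectionMatrix_apply_one_zero :
    parallelSumR ((c : ℂ) • reflectionMatrix c s) ((c : ℂ) • reflectionMatrix c (-s)) 1 0 =
      (c ^ 3 / s : ℝ) := by
  have hc : c ^ 2 ≠ 1 := by contrapose! hs; nlinarith
  have hcs' : (c : ℂ) ^ 2 + (s : ℂ) ^ 2 = 1 := by exact_mod_cast hcs
  have hs' : (s : ℂ) ≠ 0 := by exact_mod_cast hs
  rw [parallelSumR, inv_two_sub_smul_reflectionMatrix_sub hc, mul_diagonal,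
    one_sub_smul_reflectionMatrix_mul_apply_one_zero]
  rw [show 2 - 2 * (c : ℂ) ^ 2 = 2 * s ^ 2 by linear_combination -2 * hcs']
  push_cast
  field_simp

lemma div_le_opNorm_parallelSumL_reflectionMatrix :
    c ^ 3 / s ≤ opNorm (parallelSumL ((c : ℂ) • reflectionMatrix c s)
      ((c : ℂ) • reflectionMatrix c (-s))) := by
  refine (le_abs_self _).trans (Eq.trans_le ?_ (norm_apply_le_opNorm _ 0 1))
  rw [parallelSumL_reflectionMatrix_apply_zero_one hcs hs, norm_neg, Complex.norm_real, norm_eq_abs]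

lemma div_le_opNorm_parallelSumR_reflectionMatrix :
    c ^ 3 / s ≤ opNorm (parallelSumR ((c : ℂ) • reflectionMatrix c s)
      ((c : ℂ) • reflectionMatrix c (-s))) := by
  refine (le_abs_self _).trans (Eq.trans_le ?_ (norm_apply_le_opNorm _ 1 0))
  rw [parallelSumR_reflectionMatrix_apply_one_zero hcs hs, Complex.norm_real, norm_eq_abs]

end ParallelSumsAlongPath

/-- **Unboundedness of the decoupled NC parallel sums on the NC bidisk.**
Along `X_t = cos t·[[cos t, sin t],[sin t, −cos t]]`,
`Y_t = cos t·[[cos t, −sin t],[−sin t, −cos t]]`, the decoupled parallel sums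
`(2I − X_t − Y_t)⁻¹(I − X_t)(I − Y_t)` and `(I − X_t)(I − Y_t)(2I − X_t − Y_t)⁻¹`
blow up: for every `M > 0` there is `t ∈ (0, π/2)` with `‖X_t‖ < 1`, `‖Y_t‖ < 1`,
`2I − X_t − Y_t` invertible, and both norms exceeding `M`. -/
theorem decoupled_parallel_sums_unbounded :
    ∀ M : ℝ, 0 < M → ∃ t : ℝ, 0 < t ∧ t < Real.pi / 2 ∧
      (let Xt : Matrix (Fin 2) (Fin 2) ℂ :=
        ((Real.cos t : ℝ) : ℂ) •
          !![((Real.cos t : ℝ) : ℂ), ((Real.sin t : ℝ) : ℂ);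
             ((Real.sin t : ℝ) : ℂ), -((Real.cos t : ℝ) : ℂ)]
      let Yt : Matrix (Fin 2) (Fin 2) ℂ :=
        ((Real.cos t : ℝ) : ℂ) •
          !![((Real.cos t : ℝ) : ℂ), -((Real.sin t : ℝ) : ℂ);
             -((Real.sin t : ℝ) : ℂ), -((Real.cos t : ℝ) : ℂ)]
      opNorm Xt < 1 ∧ opNorm Yt < 1 ∧ IsUnit (2 - Xt - Yt) ∧
        M < opNorm ((2 - Xt - Yt)⁻¹ * ((1 - Xt) * (1 - Yt))) ∧
        M < opNorm ((1 - Xt) * (1 - Yt) * (2 - Xt - Yt)⁻¹)) := by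
  intro M _
  obtain ⟨t, hMt, ht0, htπ⟩ :=
    ((tendsto_cos_pow_three_div_sin_nhdsGT_zero.eventually_gt_atTop M).and
      (Ioo_mem_nhdsGT (half_pos pi_pos))).exists
  have hs : 0 < sin t := sin_pos_of_pos_of_lt_pi ht0 (by linarith [pi_pos])
  have hcs : cos t ^ 2 + sin t ^ 2 = 1 := cos_sq_add_sin_sq t
  have hc : cos t ^ 2 < 1 := by nlinarith
  have hc' : ‖(cos t : ℂ)‖ < 1 := by
    rwa [Complex.norm_real, norm_eq_abs, ← sq_lt_one_iff_abs_lt_one]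
  have hX := reflectionMatrix_mem_unitary hcs
  have hY : reflectionMatrix (cos t) (-(sin t : ℂ)) ∈ unitary _ := by
    simpa using reflectionMatrix_mem_unitary (c := cos t) (s := -sin t) (by rwa [neg_sq])
  exact ⟨t, ht0, htπ, (opNorm_smul_of_mem_unitary hX _).trans_lt hc',
    (opNorm_smul_of_mem_unitary hY _).trans_lt hc',
    isUnit_two_sub_smul_reflectionMatrix_sub hc.ne _,
    hMt.trans_le (div_le_opNorm_parallelSumL_reflectionMatrix hcs hs.ne'),
    hMt.trans_le (div_le_opNorm_parallelSumR_reflectionMatrix hcs hs.ne')⟩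
end
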